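/- arXiv:2206.07540 — 4 statements merged into one kernel-verified Lean document; each statement's English description precedes it below -/
import Mathlib

section
/- Let ψ : G → G be a commutator-central endomorphism of a group G and let α ∈ 𝓔. Then for all g, h ∈ G, the element ψ_α(g·h) · ψ_α(g)⁻¹ · ψ_α(h)⁻¹ lies in the center Z(G); that is, ψ_α(g·h) · ψ_α(g)⁻¹ ≡ ψ_α(h) modulo Z(G). -/
/-- Evaluation of an element of the free group `𝓔 = FreeGroup (Monoid.End G)`
at an element `g : G`: the image of `α` under the homomorphism `𝓔 → G`
given by `FreeGroup.lift (fun φ => φ g)`. -/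
def evalE {G : Type*} [Group G] (α : FreeGroup (Monoid.End G)) (g : G) : G :=
  FreeGroup.lift (fun φ : Monoid.End G => φ g) α

open scoped commutatorElement

/-!
Modulo commutators, `g ↦ α(g)` is a homomorphism: in the abelianization it is the value at `g`
of `α` evaluated in the commutative group `G →* Abelianization G`. So `α(g·h)` and `α(g)·α(h)`
differ by an element of `[G, G]`, which `ψ` sends into the center, and reordering
`ψ(α(g))⁻¹ ψ(α(h))⁻¹` costs one more commutator `ψ ⁅α(g), α(h)⁆`.
-/

section

variable {G H : Type*} [Group G] [Group H]

theorem commutator_le_comap_center_of_map_commutatorElement_mem {ψ : G →* H}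
    (hψ : ∀ g h : G, ψ ⁅g, h⁆ ∈ Subgroup.center H) :
    commutator G ≤ (Subgroup.center H).comap ψ := by
  rw [commutator_eq_closure, Subgroup.closure_le]
  rintro _ ⟨g, h, rfl⟩
  exact hψ g h

theorem abelianizationOf_evalE (α : FreeGroup (Monoid.End G)) (g : G) :
    Abelianization.of (evalE α g) =
      FreeGroup.lift (fun φ : Monoid.End G => Abelianization.of.comp φ) α g := by
  have h := FreeGroup.ext_hom (Abelianization.of.comp (FreeGroup.lift fun φ : Monoid.End G => φ g))
    ((MonoidHom.eval g).comp (FreeGroup.lift fun φ : Monoid.End G => Abelianization.of.comp φ))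
    fun φ => by
      simp only [MonoidHom.comp_apply, FreeGroup.lift_apply_of, MonoidHom.eval_apply_apply]
      rfl
  exact DFunLike.congr_fun h α

theorem evalE_mul_mul_inv_mem_commutator (α : FreeGroup (Monoid.End G)) (g h : G) :
    evalE α (g * h) * (evalE α g * evalE α h)⁻¹ ∈ commutator G := by
  rw [← QuotientGroup.eq_one_iff]
  change Abelianization.of _ = 1
  rw [map_mul, map_inv, mul_inv_eq_one]
  simp only [map_mul, abelianizationOf_evalE]

end

/-- `ψ_α(g·h) · ψ_α(g)⁻¹ ≡ ψ_α(h)` modulo the center. -/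
theorem psiAlpha_cancel_mod_center {G : Type*} [Group G]
    (ψ : Monoid.End G) (hψ : ∀ g h : G, ψ ⁅g, h⁆ ∈ Subgroup.center G)
    (α : FreeGroup (Monoid.End G)) (g h : G) :
    ψ (evalE α (g * h)) * (ψ (evalE α g))⁻¹ * (ψ (evalE α h))⁻¹ ∈ Subgroup.center G := by
  set a := evalE α g
  set b := evalE α h
  have hdefect : ψ (evalE α (g * h) * (a * b)⁻¹) ∈ Subgroup.center G :=
    commutator_le_comap_center_of_map_commutatorElement_mem (ψ := ψ) hψ
      (evalE_mul_mul_inv_mem_commutator α g h)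
  have hsplit : ψ (evalE α (g * h)) * (ψ a)⁻¹ * (ψ b)⁻¹ =
      ψ (evalE α (g * h) * (a * b)⁻¹) * ψ ⁅a, b⁆ := by
    simp only [map_mul, map_inv, commutatorElement_def]
    group
  rw [hsplit]
  exact Subgroup.mul_mem _ hdefect (hψ a b)
end

section
/- Let ψ : G → G be a commutator-central endomorphism of a group G and let α ∈ 𝓔. Write g ∘ h := g ∘_{ψ,α} h, and for x ∈ G write S(x) := ψ_α(x)⁻¹ · x⁻¹ · ψ_α(x) (the inverse of x in (G, ∘)). Define R : G × G → G × G by R(g,h) = (g⁻¹·(g ∘ h), S(g⁻¹·(g ∘ h)) ∘ g ∘ h). Then R satisfies the set-theoretic Yang–Baxter (braid) equation: (R × id) ∘ (id × R) ∘ (R × id) = (id × R) ∘ (R × id) ∘ (id × R) as maps G × G × G → G × G × G, where R × id applies R to the first two coordinates and id × R applies R to the last two coordinates. -/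
/-- The binary operation `g ∘_{ψ,α} h = g · ψ_α(g) · h · ψ_α(g)⁻¹`, where
`ψ_α(g) = ψ (α(g))`. -/
def op {G : Type*} [Group G] (ψ : Monoid.End G) (α : FreeGroup (Monoid.End G)) (g h : G) : G :=
  g * ψ (evalE α g) * h * (ψ (evalE α g))⁻¹

/-- The `∘_{ψ,α}`-inverse of `x`, namely `ψ_α(x)⁻¹ · x⁻¹ · ψ_α(x)`. -/
def opInv {G : Type*} [Group G] (ψ : Monoid.End G) (α : FreeGroup (Monoid.End G)) (x : G) : G :=
  (ψ (evalE α x))⁻¹ * x⁻¹ * ψ (evalE α x)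

/-- The Yang–Baxter map `R(g,h) = (g⁻¹·(g∘h), S(g⁻¹·(g∘h)) ∘ g ∘ h)` associated to
the brace `(G, ·, ∘_{ψ,α})`, where `S` is the `∘`-inverse. -/
def ybR {G : Type*} [Group G] (ψ : Monoid.End G) (α : FreeGroup (Monoid.End G))
    (p : G × G) : G × G :=
  (p.1⁻¹ * op ψ α p.1 p.2,
    op ψ α (opInv ψ α (p.1⁻¹ * op ψ α p.1 p.2)) (op ψ α p.1 p.2))

open scoped commutatorElement

namespace YangBaxter

variable {X : Type*}

def onLeft (r : X × X → X × X) (p : X × X × X) : X × X × X :=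
  ((r (p.1, p.2.1)).1, (r (p.1, p.2.1)).2, p.2.2)

def onRight (r : X × X → X × X) (p : X × X × X) : X × X × X :=
  (p.1, r p.2)

def IsSolution (r : X × X → X × X) : Prop :=
  onLeft r ∘ onRight r ∘ onLeft r = onRight r ∘ onLeft r ∘ onRight r

end YangBaxter

open YangBaxter

namespace LambdaBrace

variable {G : Type*} [Group G] (lam : G →* MulAut G)

def circ (g h : G) : G := g * lam g h

def circInv (g : G) : G := (lam g)⁻¹ g⁻¹

def yangBaxterMap (p : G × G) : G × G :=
  (lam p.1 p.2, circ lam (circInv lam (lam p.1 p.2)) (circ lam p.1 p.2))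

def circ₃ (p : G × G × G) : G := circ lam p.1 (circ lam p.2.1 p.2.2)

lemma yangBaxterMap_fst (p : G × G) : (yangBaxterMap lam p).1 = lam p.1 p.2 := rfl

lemma one_circ (g : G) : circ lam 1 g = g := by simp [circ]

lemma circ_circInv (g : G) : circ lam g (circInv lam g) = 1 := by
  simp [circ, circInv]

section

variable {lam} (hlam : ∀ x y, lam (lam x y) = lam y)
include hlam

lemma lam_circ (g h : G) : lam (circ lam g h) = lam g * lam h := by
  rw [circ, map_mul, hlam]

lemma circ_assoc (g h k : G) :
    circ lam (circ lam g h) k = circ lam g (circ lam h k) := by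
  simp only [circ, map_mul, hlam, MulAut.mul_apply, mul_assoc]

lemma lam_circInv (g : G) : lam (circInv lam g) = (lam g)⁻¹ := by
  rw [circInv, ← map_inv, hlam, map_inv]

lemma circInv_circ (g : G) : circ lam (circInv lam g) g = 1 := by
  rw [circ, lam_circInv hlam, circInv, ← map_mul, inv_mul_cancel, map_one]

lemma circ_circInv_circ (g h : G) : circ lam g (circ lam (circInv lam g) h) = h := by
  rw [← circ_assoc hlam, circ_circInv, one_circ]

lemma circInv_circ_circ (g h : G) : circ lam (circInv lam g) (circ lam g h) = h := by
  rw [← circ_assoc hlam, circInv_circ hlam, one_circ]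

lemma circ_left_cancel {g h k : G} (H : circ lam g h = circ lam g k) : h = k := by
  simpa only [circInv_circ_circ hlam] using congrArg (circ lam (circInv lam g)) H

lemma circ_yangBaxterMap (p : G × G) :
    circ lam (yangBaxterMap lam p).1 (yangBaxterMap lam p).2 = circ lam p.1 p.2 :=
  circ_circInv_circ hlam _ _

lemma circ_left_cancel₃ {p q : G × G × G} (h₁ : p.1 = q.1)
    (h₂ : circ lam p.1 p.2.1 = circ lam q.1 q.2.1) (h₃ : circ₃ lam p = circ₃ lam q) : p = q := by
  rw [h₁] at h₂
  refine Prod.ext h₁ (Prod.ext (circ_left_cancel hlam h₂)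
    (circ_left_cancel hlam (g := circ lam q.1 q.2.1) ?_))
  rwa [circ₃, circ₃, ← circ_assoc hlam, ← circ_assoc hlam, h₁, h₂] at h₃

lemma circ₃_onLeft (p : G × G × G) : circ₃ lam (onLeft (yangBaxterMap lam) p) = circ₃ lam p := by
  simp only [circ₃, onLeft, ← circ_assoc hlam, circ_yangBaxterMap hlam]

lemma circ₃_onRight (p : G × G × G) :
    circ₃ lam (onRight (yangBaxterMap lam) p) = circ₃ lam p := by
  simp only [circ₃, onRight, circ_yangBaxterMap hlam]

variable (hcomm : ∀ x y, Commute (lam x) (lam y))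
include hcomm

lemma lam_yangBaxterMap_snd (p : G × G) : lam (yangBaxterMap lam p).2 = lam p.1 := by
  simp only [yangBaxterMap, lam_circ hlam, lam_circInv hlam, hlam]
  rw [(hcomm p.1 p.2).eq, inv_mul_cancel_left]

lemma lam_apply_circ (a g h : G) :
    lam a (circ lam g h) = circ lam (lam a g) (lam a h) := by
  simp only [circ, map_mul, hlam, ← MulAut.mul_apply, (hcomm a g).eq]

theorem isSolution_yangBaxterMap : IsSolution (yangBaxterMap lam) := by
  funext ⟨a, b, c⟩
  apply circ_left_cancel₃ hlam
  · simp only [Function.comp_apply, onLeft, onRight, yangBaxterMap_fst,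
      lam_yangBaxterMap_snd hlam hcomm, hlam]
    exact DFunLike.congr_fun (hcomm b a).eq c
  · simp only [Function.comp_apply, onLeft, onRight, circ_yangBaxterMap hlam]
    simp only [yangBaxterMap_fst, lam_yangBaxterMap_snd hlam hcomm]
    rw [← lam_apply_circ hlam hcomm, ← lam_apply_circ hlam hcomm]
    exact congrArg (lam a) (circ_yangBaxterMap hlam (b, c)).symm
  · simp only [Function.comp_apply, circ₃_onLeft hlam, circ₃_onRight hlam]

end

end LambdaBrace

lemma MulAut.conj_eq_one_of_mem_center {G : Type*} [Group G] {z : G}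
    (hz : z ∈ Subgroup.center G) : MulAut.conj z = 1 := by
  ext g
  rw [MulAut.conj_apply, ← Subgroup.mem_center_iff.mp hz g, mul_inv_cancel_right]; rfl

lemma commute_conj_of_commutator_mem_center {G H F : Type*} [Group G] [Group H] [FunLike F H G]
    [MonoidHomClass F H G] (f : F) (hf : ∀ a b : H, f ⁅a, b⁆ ∈ Subgroup.center G) (a b : H) :
    Commute (MulAut.conj (f a)) (MulAut.conj (f b)) := by
  have hab : f (a * b) = f ⁅a, b⁆ * f (b * a) := by
    rw [← map_mul, commutatorElement_def]; group
  calc MulAut.conj (f a) * MulAut.conj (f b) = MulAut.conj (f (a * b)) := by simp only [map_mul]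
    _ = MulAut.conj (f (b * a)) := by
      rw [hab, map_mul, MulAut.conj_eq_one_of_mem_center (hf a b), one_mul]
    _ = MulAut.conj (f b) * MulAut.conj (f a) := by simp only [map_mul]

section EvalE

variable {G : Type*} [Group G]

@[simp] lemma evalE_of (φ : Monoid.End G) (g : G) : evalE (FreeGroup.of φ) g = φ g :=
  FreeGroup.lift_apply_of

@[simp] lemma evalE_mul (β γ : FreeGroup (Monoid.End G)) (g : G) :
    evalE (β * γ) g = evalE β g * evalE γ g :=
  map_mul _ _ _

@[simp] lemma evalE_inv (β : FreeGroup (Monoid.End G)) (g : G) : evalE β⁻¹ g = (evalE β g)⁻¹ :=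
  map_inv _ _

lemma evalE_apply_one (α : FreeGroup (Monoid.End G)) : evalE α (1 : G) = 1 := by
  induction α using FreeGroup.induction_on <;> simp_all [evalE]

end EvalE

section CommutatorCentral

variable {G : Type*} [Group G] (ψ : Monoid.End G)
  (hψ : ∀ g h : G, ψ ⁅g, h⁆ ∈ Subgroup.center G) (α : FreeGroup (Monoid.End G))
include hψ

lemma conj_evalE_mul (x y : G) :
    MulAut.conj (ψ (evalE α (x * y))) =
      MulAut.conj (ψ (evalE α x)) * MulAut.conj (ψ (evalE α y)) := by
  have hcomm := commute_conj_of_commutator_mem_center ψ hψ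
  induction α using FreeGroup.induction_on with
  | C1 => simp only [evalE, map_one, mul_one]
  | of φ => simp only [evalE_of, map_mul]
  | inv_of φ ih =>
    simp only [evalE_inv, map_inv, ih, mul_inv_rev]
    exact (hcomm _ _).inv_inv.eq.symm
  | mul β γ ihβ ihγ =>
    simp only [evalE_mul, map_mul, ihβ, ihγ]
    exact (hcomm _ _).mul_mul_mul_comm _ _

def conjLam : G →* MulAut G where
  toFun x := MulAut.conj (ψ (evalE α x))
  map_one' := by rw [evalE_apply_one, map_one, map_one]
  map_mul' := conj_evalE_mul ψ hψ α

lemma conjLam_commute (x y : G) : Commute (conjLam ψ hψ α x) (conjLam ψ hψ α y) :=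
  commute_conj_of_commutator_mem_center ψ hψ _ _

lemma conjLam_conjLam (x y : G) :
    conjLam ψ hψ α (conjLam ψ hψ α x y) = conjLam ψ hψ α y := by
  change conjLam ψ hψ α (MulAut.conj (ψ (evalE α x)) y) = _
  rw [MulAut.conj_apply, map_mul, map_mul, map_inv, (conjLam_commute ψ hψ α _ _).eq,
    mul_inv_cancel_right]

lemma op_eq_circ : op ψ α = LambdaBrace.circ (conjLam ψ hψ α) := by
  funext g h
  simp only [op, LambdaBrace.circ, conjLam, MonoidHom.coe_mk, OneHom.coe_mk, MulAut.conj_apply,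
    mul_assoc]

lemma opInv_eq_circInv : opInv ψ α = LambdaBrace.circInv (conjLam ψ hψ α) := by
  funext g
  simp only [opInv, LambdaBrace.circInv, conjLam, MonoidHom.coe_mk, OneHom.coe_mk, ← map_inv,
    MulAut.conj_apply, inv_inv]

lemma ybR_eq_yangBaxterMap : ybR ψ α = LambdaBrace.yangBaxterMap (conjLam ψ hψ α) := by
  funext p
  simp only [ybR, LambdaBrace.yangBaxterMap, op_eq_circ ψ hψ, opInv_eq_circInv ψ hψ,
    LambdaBrace.circ, inv_mul_cancel_left]

end CommutatorCentral

/-- the map `R` satisfies the set-theoretic Yang–Baxter (braid)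
equation `(R×id) ∘ (id×R) ∘ (R×id) = (id×R) ∘ (R×id) ∘ (id×R)` on `G × G × G`. -/
theorem yang_baxter {G : Type*} [Group G]
    (ψ : Monoid.End G) (hψ : ∀ g h : G, ψ ⁅g, h⁆ ∈ Subgroup.center G)
    (α : FreeGroup (Monoid.End G)) :
    (fun p : G × G × G => ((ybR ψ α (p.1, p.2.1)).1, (ybR ψ α (p.1, p.2.1)).2, p.2.2)) ∘
        (fun p : G × G × G => (p.1, ybR ψ α p.2)) ∘
        (fun p : G × G × G => ((ybR ψ α (p.1, p.2.1)).1, (ybR ψ α (p.1, p.2.1)).2, p.2.2)) =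
      (fun p : G × G × G => (p.1, ybR ψ α p.2)) ∘
        (fun p : G × G × G => ((ybR ψ α (p.1, p.2.1)).1, (ybR ψ α (p.1, p.2.1)).2, p.2.2)) ∘
        (fun p : G × G × G => (p.1, ybR ψ α p.2)) := by
  rw [ybR_eq_yangBaxterMap ψ hψ α]
  exact LambdaBrace.isSolution_yangBaxterMap (conjLam_conjLam ψ hψ α) (conjLam_commute ψ hψ α)
end

section
/- Let ψ : G → G be a commutator-central endomorphism of a group G and let α ∈ 𝓔. Write g ∘ h := g ∘_{ψ,α} h, and for x ∈ G write S(x) := ψ_α(x)⁻¹ · x⁻¹ · ψ_α(x) (the inverse of x in (G, ∘)). Define R, R' : G × G → G × G by R(g,h) = (g⁻¹·(g ∘ h), S(g⁻¹·(g ∘ h)) ∘ g ∘ h) and R'(g,h) = ((g ∘ h)·g⁻¹, S((g ∘ h)·g⁻¹) ∘ g ∘ h). Then R' is a two-sided inverse of R: R' ∘ R = id and R ∘ R' = id on G × G. -/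
/-- The map `R'(g,h) = ((g∘h)·g⁻¹, S((g∘h)·g⁻¹) ∘ g ∘ h)`. -/
def ybR' {G : Type*} [Group G] (ψ : Monoid.End G) (α : FreeGroup (Monoid.End G))
    (p : G × G) : G × G :=
  (op ψ α p.1 p.2 * p.1⁻¹,
    op ψ α (opInv ψ α (op ψ α p.1 p.2 * p.1⁻¹)) (op ψ α p.1 p.2))

open scoped commutatorElement


/-
Write `T x := ψ (α(x))`, so that `g ∘ h = g · T g · h · (T g)⁻¹`. Both identities
`S(a) ∘ (a ∘ k) = k` and `a ∘ (S(a) ∘ k) = k` reduce, after cancelling, to conjugation by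
`T a · T (S a)`, so it suffices that this element is central. Composed with `G → Gᵃᵇ`,
`α(·)` becomes a homomorphism into an abelian group, hence sends `S a = (T a)⁻¹ a⁻¹ (T a)`
to the inverse of the image of `a`; thus `α(a) · α(S a)` is a product of commutators,
which `ψ` sends into the center.
-/

section

variable {G : Type*} [Group G]

def evalAb (α : FreeGroup (Monoid.End G)) : G →* Abelianization G :=
  FreeGroup.lift (fun φ : Monoid.End G => Abelianization.of.comp (φ : G →* G)) α

theorem evalAb_apply (α : FreeGroup (Monoid.End G)) (x : G) :
    evalAb α x = Abelianization.of (evalE α x) := by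
  have h : (MonoidHom.eval x).comp (FreeGroup.lift fun φ : Monoid.End G =>
        Abelianization.of.comp (φ : G →* G)) =
      Abelianization.of.comp (FreeGroup.lift fun φ : Monoid.End G => φ x) :=
    FreeGroup.ext_hom _ _ fun φ => rfl
  exact DFunLike.congr_fun h α

theorem evalE_mul_evalE_opInv_mem_commutator (ψ : Monoid.End G)
    (α : FreeGroup (Monoid.End G)) (x : G) :
    evalE α x * evalE α (opInv ψ α x) ∈ commutator G := by
  rw [← Abelianization.ker_of, MonoidHom.mem_ker, map_mul, ← evalAb_apply, ← evalAb_apply,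
    opInv, map_mul, map_mul, map_inv, map_inv]
  simp [mul_comm]

variable {ψ : Monoid.End G} (hψ : ∀ g h : G, ψ ⁅g, h⁆ ∈ Subgroup.center G)
  (α : FreeGroup (Monoid.End G))
include hψ

theorem map_mem_center_of_mem_commutator {c : G} (hc : c ∈ commutator G) :
    ψ c ∈ Subgroup.center G :=
  (Subgroup.commutator_le.mpr fun g _ h _ => hψ g h : commutator G ≤
    (Subgroup.center G).comap (ψ : G →* G)) hc

theorem commute_psi_evalE_mul_psi_evalE_opInv (x k : G) :
    Commute (ψ (evalE α x) * ψ (evalE α (opInv ψ α x))) k := by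
  rw [← map_mul]
  exact Subgroup.mem_center_iff.mp (map_mem_center_of_mem_commutator hψ
    (evalE_mul_evalE_opInv_mem_commutator ψ α x)) k |>.symm

theorem op_opInv_cancel_left (a k : G) : op ψ α a (op ψ α (opInv ψ α a) k) = k := by
  have hz := commute_psi_evalE_mul_psi_evalE_opInv hψ α a k
  simp only [op]
  generalize ψ (evalE α (opInv ψ α a)) = Tb at hz ⊢
  rw [opInv]
  generalize ψ (evalE α a) = Ta at hz ⊢
  calc a * Ta * (Ta⁻¹ * a⁻¹ * Ta * Tb * k * Tb⁻¹) * Ta⁻¹ = Ta * Tb * k * (Ta * Tb)⁻¹ := by group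
    _ = k := by rw [hz.eq, mul_inv_cancel_right]

theorem opInv_op_cancel_left (a k : G) : op ψ α (opInv ψ α a) (op ψ α a k) = k := by
  have hz := commute_psi_evalE_mul_psi_evalE_opInv hψ α a
    (a * ψ (evalE α a) * k * (ψ (evalE α a))⁻¹)
  simp only [op]
  generalize ψ (evalE α (opInv ψ α a)) = Tb at hz ⊢
  rw [opInv]
  generalize ψ (evalE α a) = Ta at hz ⊢
  calc Ta⁻¹ * a⁻¹ * Ta * Tb * (a * Ta * k * Ta⁻¹) * Tb⁻¹
        = Ta⁻¹ * a⁻¹ * ((Ta * Tb) * (a * Ta * k * Ta⁻¹)) * (Ta * Tb)⁻¹ * Ta := by group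
    _ = k := by rw [hz.eq]; group

end

/-- `R'` is a two-sided inverse of `R`. -/
theorem ybR'_inverse {G : Type*} [Group G]
    (ψ : Monoid.End G) (hψ : ∀ g h : G, ψ ⁅g, h⁆ ∈ Subgroup.center G)
    (α : FreeGroup (Monoid.End G)) :
    ybR' ψ α ∘ ybR ψ α = id ∧ ybR ψ α ∘ ybR' ψ α = id := by
  constructor <;> funext ⟨g, h⟩ <;>
    simp only [Function.comp_apply, ybR, ybR', id_eq, op_opInv_cancel_left hψ,
      opInv_op_cancel_left hψ, mul_inv_rev, inv_inv, mul_inv_cancel_left, inv_mul_cancel_right]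
end

section
/- Let ψ : G → G be a commutator-central endomorphism of a group G and let β, β' ∈ 𝓔. Then the operations ∘_{ψ,β} and ∘_{ψ,β'} coincide (i.e., g ∘_{ψ,β} h = g ∘_{ψ,β'} h for all g, h ∈ G) if and only if ψ((β · β'⁻¹)(g)) ∈ Z(G) for all g ∈ G, where β · β'⁻¹ is the product in the free group 𝓔. -/
section

variable {G : Type*} [Group G]

theorem evalE_mul_inv (β β' : FreeGroup (Monoid.End G)) (g : G) :
    evalE (β * β'⁻¹) g = evalE β g * (evalE β' g)⁻¹ := by
  simp only [evalE, map_mul, map_inv]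

theorem op_eq_mul_conj (ψ : Monoid.End G) (α : FreeGroup (Monoid.End G)) (g h : G) :
    op ψ α g h = g * (ψ (evalE α g) * h * (ψ (evalE α g))⁻¹) := by
  simp only [op, mul_assoc]

theorem mul_inv_mem_center_iff_conj_eq {a b : G} :
    a * b⁻¹ ∈ Subgroup.center G ↔ ∀ h, a * h * a⁻¹ = b * h * b⁻¹ := by
  rw [Subgroup.mem_center_iff]
  constructor
  · intro hcomm h
    calc a * h * a⁻¹ = (a * b⁻¹) * (b * h * b⁻¹) * (a * b⁻¹)⁻¹ := by group
      _ = (b * h * b⁻¹) * (a * b⁻¹) * (a * b⁻¹)⁻¹ := by rw [hcomm]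
      _ = b * h * b⁻¹ := by group
  · intro hconj h
    calc h * (a * b⁻¹) = b * (b⁻¹ * h * b) * b⁻¹ * (a * b⁻¹) := by group
      _ = a * (b⁻¹ * h * b) * a⁻¹ * (a * b⁻¹) := by rw [hconj]
      _ = a * b⁻¹ * h := by group

end

open scoped commutatorElement

theorem op_eq_iff_center_general {G : Type*} [Group G]
    (ψ : Monoid.End G)
    (β β' : FreeGroup (Monoid.End G)) :
    (∀ g h : G, op ψ β g h = op ψ β' g h) ↔
      ∀ g : G, ψ (evalE (β * β'⁻¹) g) ∈ Subgroup.center G := by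
  simp only [op_eq_mul_conj, mul_right_inj, evalE_mul_inv, map_mul, map_inv,
    mul_inv_mem_center_iff_conj_eq]

/-- `∘_{ψ,β} = ∘_{ψ,β'}` if and only if `ψ((β·β'⁻¹)(g))` is
central for every `g`. -/
theorem op_eq_iff_center {G : Type*} [Group G]
    (ψ : Monoid.End G) (hψ : ∀ g h : G, ψ ⁅g, h⁆ ∈ Subgroup.center G)
    (β β' : FreeGroup (Monoid.End G)) :
    (∀ g h : G, op ψ β g h = op ψ β' g h) ↔
      ∀ g : G, ψ (evalE (β * β'⁻¹) g) ∈ Subgroup.center G :=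
  op_eq_iff_center_general ψ β β'
end
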